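/- arXiv:2510.22361 — 13 statements merged into one kernel-verified Lean document; each statement's English description precedes it below -/
import Mathlib

section
/- Define sequences b, c, d by b(0)=c(0)=d(0)=0, b(1)=c(1)=d(1)=1, and for n≥2: b(n)=c(n-1)+2^((n-2)/2) if n even, b(n)=d(n-1)+2^((n-1)/2) if n odd; c(n)=b(n-1)+2^((n-2)/2) if n even, c(n)=b(n-2)+5·2^((n-3)/2)−1 if n odd; d(n)=b(n-2)+3·2^((n-2)/2)−1 if n even, d(n)=b(n-1)+2^((n-1)/2) if n odd. Then for all n≥3, b(n)=b(n-3)+7·2^((n-4)/2)−1 if n is even, and b(n)=b(n-3)+5·2^((n-3)/2)−1 if n is odd. -/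
/-- From the coupled first-order system for the optimal move counts `b`, `c`, `d`
of the parity-constrained four-peg Tower of Hanoi, the sequence `b` satisfies the
third-order recurrence `b(n) = b(n-3) + 7·2^((n-4)/2) − 1` for even `n ≥ 3` and
`b(n) = b(n-3) + 5·2^((n-3)/2) − 1` for odd `n ≥ 3`. -/
theorem stmt0 (b c d : ℕ → ℕ)
    (hb0 : b 0 = 0) (hc0 : c 0 = 0) (hd0 : d 0 = 0)
    (hb1 : b 1 = 1) (hc1 : c 1 = 1) (hd1 : d 1 = 1)
    (hbe : ∀ n, 2 ≤ n → Even n → b n = c (n - 1) + 2 ^ ((n - 2) / 2))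
    (hbo : ∀ n, 2 ≤ n → Odd n → b n = d (n - 1) + 2 ^ ((n - 1) / 2))
    (hce : ∀ n, 2 ≤ n → Even n → c n = b (n - 1) + 2 ^ ((n - 2) / 2))
    (hco : ∀ n, 2 ≤ n → Odd n → c n = b (n - 2) + 5 * 2 ^ ((n - 3) / 2) - 1)
    (hde : ∀ n, 2 ≤ n → Even n → d n = b (n - 2) + 3 * 2 ^ ((n - 2) / 2) - 1)
    (hdo : ∀ n, 2 ≤ n → Odd n → d n = b (n - 1) + 2 ^ ((n - 1) / 2)) :
    ∀ n, 3 ≤ n →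
      (Even n → b n = b (n - 3) + 7 * 2 ^ ((n - 4) / 2) - 1) ∧
      (Odd n → b n = b (n - 3) + 5 * 2 ^ ((n - 3) / 2) - 1) := by
  intro n hn
  refine ⟨fun he => ?_, fun ho => ?_⟩
  · obtain ⟨k, hk⟩ := he
    have hk2 : 2 ≤ k := by omega
    have h1 : b n = c (n - 1) + 2 ^ ((n - 2) / 2) := hbe n (by omega) ⟨k, hk⟩
    have h2 : c (n - 1) = b (n - 1 - 2) + 5 * 2 ^ ((n - 1 - 3) / 2) - 1 :=
      hco (n - 1) (by omega) ⟨k - 1, by omega⟩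
    have e1 : n - 1 - 2 = n - 3 := by omega
    have e2 : (n - 1 - 3) / 2 = (n - 4) / 2 := by omega
    have e3 : (n - 2) / 2 = (n - 4) / 2 + 1 := by omega
    rw [h1, h2, e1, e2, e3, pow_succ]
    have hp : 1 ≤ 2 ^ ((n - 4) / 2) := Nat.one_le_two_pow
    omega
  · obtain ⟨k, hk⟩ := ho
    have hk1 : 1 ≤ k := by omega
    have h1 : b n = d (n - 1) + 2 ^ ((n - 1) / 2) := hbo n (by omega) ⟨k, hk⟩
    have h2 : d (n - 1) = b (n - 1 - 2) + 3 * 2 ^ ((n - 1 - 2) / 2) - 1 :=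
      hde (n - 1) (by omega) ⟨k, by omega⟩
    have e1 : n - 1 - 2 = n - 3 := by omega
    have e3 : (n - 1) / 2 = (n - 3) / 2 + 1 := by omega
    rw [h1, h2, e1, e3, pow_succ]
    have hp : 1 ≤ 2 ^ ((n - 3) / 2) := Nat.one_le_two_pow
    omega
end

section
/- Define a by a(0)=0, a(1)=1, a(2)=3, a(3)=4 (or equivalently via a(n)=2b(n-1)+1), and for n≥4: a(n)=a(n-3)+5·2^((n-2)/2)−2 if n even, a(n)=a(n-3)+7·2^((n-3)/2)−2 if n odd. Then for all n≥0, a(n) ≤ 2^n − 1. -/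
/-- The optimal full-tower transfer count `a` of the parity-constrained four-peg
Tower of Hanoi never exceeds the classical three-peg optimum `2^n − 1`. -/
theorem stmt2 (a : ℕ → ℕ)
    (ha0 : a 0 = 0) (ha1 : a 1 = 1) (ha2 : a 2 = 3) (ha3 : a 3 = 5)
    (hae : ∀ n, 4 ≤ n → Even n → a n = a (n - 3) + 5 * 2 ^ ((n - 2) / 2) - 2)
    (hao : ∀ n, 4 ≤ n → Odd n → a n = a (n - 3) + 7 * 2 ^ ((n - 3) / 2) - 2) :
    ∀ n, a n ≤ 2 ^ n - 1 := by
  intro n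
  induction n using Nat.strong_induction_on with
  | _ n ih =>
    rcases lt_or_ge n 4 with h | h
    · interval_cases n <;> simp [ha0, ha1, ha2, ha3]
    · have IH := ih (n - 3) (by omega)
      have hpn : (2:ℕ) ^ n = 2 ^ (n - 3) * 8 := by
        have h' : n - 3 + 3 = n := by omega
        calc (2:ℕ) ^ n = 2 ^ (n - 3 + 3) := by rw [h']
          _ = 2 ^ (n - 3) * 8 := by rw [pow_add]; norm_num
      have h1 : (1:ℕ) ≤ 2 ^ (n - 3) := Nat.one_le_two_pow
      rcases Nat.even_or_odd n with he | ho
      · rw [hae n h he]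
        have hpow : (2:ℕ) ^ ((n - 2) / 2) ≤ 2 ^ (n - 3) :=
          Nat.pow_le_pow_right (by norm_num) (by omega)
        have h2 : (1:ℕ) ≤ 2 ^ ((n - 2) / 2) := Nat.one_le_two_pow
        omega
      · rw [hao n h ho]
        have hpow : (2:ℕ) ^ ((n - 3) / 2) ≤ 2 ^ (n - 3) :=
          Nat.pow_le_pow_right (by norm_num) (by omega)
        have h2 : (1:ℕ) ≤ 2 ^ ((n - 3) / 2) := Nat.one_le_two_pow
        omega
end

section
/- Define b by b(0)=0, b(1)=1, b(2)=2, and for n≥3: b(n)=b(n-3)+7·2^((n-4)/2)−1 if n even, b(n)=b(n-3)+5·2^((n-3)/2)−1 if n odd. Define a(0)=0 and a(n)=2·b(n-1)+1 for n≥1. Then for all n≥0, b(n) ≤ a(n). -/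
/-- The optimal parity-separation count `b` is at most the optimal full-tower
transfer count `a` in the parity-constrained four-peg Tower of Hanoi. -/
theorem stmt3 (a b : ℕ → ℕ)
    (hb0 : b 0 = 0) (hb1 : b 1 = 1) (hb2 : b 2 = 2)
    (hbe : ∀ n, 3 ≤ n → Even n → b n = b (n - 3) + 7 * 2 ^ ((n - 4) / 2) - 1)
    (hbo : ∀ n, 3 ≤ n → Odd n → b n = b (n - 3) + 5 * 2 ^ ((n - 3) / 2) - 1)
    (ha0 : a 0 = 0)
    (ha : ∀ n, 1 ≤ n → a n = 2 * b (n - 1) + 1) :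
    ∀ n, b n ≤ a n := by
  have key : ∀ n : ℕ, b (n + 1) ≤ 2 * b n + 1 := by
    intro n
    induction n using Nat.strong_induction_on with
    | _ n ih =>
      match n with
      | 0 => simp [hb0, hb1]
      | 1 => simp [hb1, hb2]
      | 2 =>
        have h3 : b 3 = b 0 + 5 * 2 ^ 0 - 1 := hbo 3 (by norm_num) (by decide)
        simp [hb0, hb2] at h3 ⊢; omega
      | (k + 3) =>
        rcases Nat.even_or_odd k with hk | hk
        · obtain ⟨j, rfl⟩ := hk
          have h1 : b (2 * j + 4) = b (2 * j + 1) + 7 * 2 ^ j - 1 := by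
            have := hbe (2 * j + 4) (by omega) ⟨j + 2, by ring⟩
            simpa using this
          have h2 : b (2 * j + 3) = b (2 * j) + 5 * 2 ^ j - 1 := by
            have := hbo (2 * j + 3) (by omega) ⟨j + 1, by ring⟩
            simpa using this
          have hIH : b (2 * j + 1) ≤ 2 * b (2 * j) + 1 := ih (2 * j) (by omega)
          have hp : 1 ≤ 2 ^ j := Nat.one_le_two_pow
          rw [show j+j+3+1 = 2*j+4 from by ring, show j+j+3 = 2*j+3 from by ring, h1, h2]
          omega
        · obtain ⟨j, rfl⟩ := hk
          have h1 : b (2 * j + 5) = b (2 * j + 2) + 5 * 2 ^ (j + 1) - 1 := by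
            have := hbo (2 * j + 5) (by omega) ⟨j + 2, by ring⟩
            have e : (2 * j + 5 - 3) / 2 = j + 1 := by omega
            rw [e] at this; simpa using this
          have h2 : b (2 * j + 4) = b (2 * j + 1) + 7 * 2 ^ j - 1 := by
            have := hbe (2 * j + 4) (by omega) ⟨j + 2, by ring⟩
            simpa using this
          have hIH : b (2 * j + 2) ≤ 2 * b (2 * j + 1) + 1 := ih (2 * j + 1) (by omega)
          have hp : 1 ≤ 2 ^ j := Nat.one_le_two_pow
          have e1 : (2 * j + 1 + 3) + 1 = 2 * j + 5 := by ring
          have e2 : (2 * j + 1) + 3 = 2 * j + 4 := by ring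
          have e3 : 2 ^ (j + 1) = 2 * 2 ^ j := by ring
          rw [e1, e2, h1, h2, e3]
          omega
  intro n
  match n with
  | 0 => simp [hb0, ha0]
  | (m + 1) =>
    have := ha (m + 1) (by omega)
    simp at this
    rw [this]
    exact key m
end

section
/- Define a by a(0)=0, a(1)=1, a(2)=3, a(3)=5, and for n≥4: a(n)=a(n-3)+5·2^((n-2)/2)−2 if n even, a(n)=a(n-3)+7·2^((n-3)/2)−2 if n odd. Then the ratio a(2k)/a(2k-1) converges to 27/19 as k→∞, and a(2k+1)/a(2k) converges to 38/27. -/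
/-!
Up to a bounded correction, `a` has an exact closed form: with
`d(n) = hanoiCorrection n ∈ {81, 79, 71}` depending only on `n mod 3`,
`21 a(2k) + 28k + d(2k) = 81 · 2^k` and `21 a(2k+1) + 14(2k+1) + d(2k+1) = 114 · 2^k`.
Since the recursion steps from `n` to `n + 3`, flipping parity and preserving `d`, both identities
follow together by a two-step induction on `k`. Hence `a(2k)`, `a(2k+1)` and `a(2k-1)` are
`(27/7) 2^k`, `(38/7) 2^k` and `(19/7) 2^k` up to `O(k)`, and the ratios converge.
-/

open Filter Topology

theorem tendsto_div_two_pow_of_abs_sub_le {u : ℕ → ℝ} {c α β : ℝ}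
    (h : ∀ k, |u k - c * 2 ^ k| ≤ α * k + β) :
    Tendsto (fun k => u k / 2 ^ k) atTop (𝓝 c) := by
  rw [tendsto_iff_norm_sub_tendsto_zero]
  have hbound : Tendsto (fun k : ℕ => α * (k * (1 / 2 : ℝ) ^ k) + β * (1 / 2 : ℝ) ^ k)
      atTop (𝓝 0) := by
    have hr₀ : (0 : ℝ) ≤ 1 / 2 := by norm_num
    have hr₁ : (1 / 2 : ℝ) < 1 := by norm_num
    simpa using ((tendsto_self_mul_const_pow_of_lt_one hr₀ hr₁).const_mul α).add
      ((tendsto_pow_atTop_nhds_zero_of_lt_one hr₀ hr₁).const_mul β)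
  refine squeeze_zero (fun _ => norm_nonneg _) (fun k => ?_) hbound
  have hpos : (0 : ℝ) < 2 ^ k := by positivity
  calc ‖u k / 2 ^ k - c‖ = |u k - c * 2 ^ k| / 2 ^ k := by
        rw [Real.norm_eq_abs, ← abs_of_pos hpos, ← abs_div, abs_of_pos hpos, sub_div,
          mul_div_cancel_right₀ _ hpos.ne']
    _ ≤ (α * k + β) / 2 ^ k := by gcongr; exact h k
    _ = α * (k * (1 / 2) ^ k) + β * (1 / 2) ^ k := by rw [one_div_pow]; ring

theorem tendsto_div_of_tendsto_div_of_tendsto_div {u v w : ℕ → ℝ} {p q : ℝ}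
    (hw : ∀ k, w k ≠ 0) (hu : Tendsto (fun k => u k / w k) atTop (𝓝 p))
    (hv : Tendsto (fun k => v k / w k) atTop (𝓝 q)) (hq : q ≠ 0) :
    Tendsto (fun k => u k / v k) atTop (𝓝 (p / q)) :=
  (hu.div hv hq).congr fun k => div_div_div_cancel_right₀ (hw k) _ _

structure HanoiRec (a : ℕ → ℕ) : Prop where
  zero : a 0 = 0
  one : a 1 = 1
  two : a 2 = 3
  three : a 3 = 5
  even : ∀ n, 4 ≤ n → Even n → a n = a (n - 3) + 5 * 2 ^ ((n - 2) / 2) - 2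
  odd : ∀ n, 4 ≤ n → Odd n → a n = a (n - 3) + 7 * 2 ^ ((n - 3) / 2) - 2

def hanoiCorrection (n : ℕ) : ℕ := if n % 3 = 0 then 81 else if n % 3 = 1 then 79 else 71

theorem hanoiCorrection_add_three (n : ℕ) : hanoiCorrection (n + 3) = hanoiCorrection n := by
  simp [hanoiCorrection]

theorem hanoiCorrection_le (n : ℕ) : hanoiCorrection n ≤ 81 := by
  unfold hanoiCorrection; split_ifs <;> norm_num

namespace HanoiRec

variable {a : ℕ → ℕ}

theorem even_step (ha : HanoiRec a) (i : ℕ) :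
    a (2 * (i + 2)) = a (2 * i + 1) + 10 * 2 ^ i - 2 := by
  rw [ha.even _ (by omega) (even_two_mul _), show (2 * (i + 2) - 2) / 2 = i + 1 by omega,
    show 2 * (i + 2) - 3 = 2 * i + 1 by omega, pow_succ]
  ring_nf

theorem odd_step (ha : HanoiRec a) (i : ℕ) :
    a (2 * (i + 2) + 1) = a (2 * (i + 1)) + 14 * 2 ^ i - 2 := by
  rw [ha.odd _ (by omega) (odd_two_mul_add_one _), show (2 * (i + 2) + 1 - 3) / 2 = i + 1 by omega,
    show 2 * (i + 2) + 1 - 3 = 2 * (i + 1) by omega, pow_succ]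
  ring_nf

theorem closed_form (ha : HanoiRec a) (k : ℕ) :
    21 * a (2 * k) + 14 * (2 * k) + hanoiCorrection (2 * k) = 81 * 2 ^ k ∧
    21 * a (2 * k + 1) + 14 * (2 * k + 1) + hanoiCorrection (2 * k + 1) = 114 * 2 ^ k := by
  induction k using Nat.twoStepInduction with
  | zero => simp [ha.zero, ha.one, hanoiCorrection]
  | one => simp [ha.two, ha.three, hanoiCorrection]
  | more i ih₀ ih₁ =>
    have hp : 1 ≤ 2 ^ i := Nat.one_le_two_pow
    rw [ha.even_step, ha.odd_step, show 2 * (i + 2) = 2 * i + 1 + 3 by ring,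
      show 2 * i + 1 + 3 + 1 = 2 * (i + 1) + 3 by ring, hanoiCorrection_add_three,
      hanoiCorrection_add_three, pow_succ, pow_succ]
    rw [pow_succ] at ih₁
    omega

theorem tendsto_even_div_two_pow (ha : HanoiRec a) :
    Tendsto (fun k => (a (2 * k) : ℝ) / 2 ^ k) atTop (𝓝 (27 / 7)) := by
  refine tendsto_div_two_pow_of_abs_sub_le (α := 2) (β := 4) fun k => ?_
  have h : (21 * a (2 * k) + 14 * (2 * k) + hanoiCorrection (2 * k) : ℝ) = 81 * 2 ^ k := by
    exact_mod_cast (ha.closed_form k).1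
  have hd : (hanoiCorrection (2 * k) : ℝ) ≤ 81 := by exact_mod_cast hanoiCorrection_le _
  rw [abs_le]
  constructor <;> linarith [(hanoiCorrection (2 * k)).cast_nonneg (α := ℝ)]

theorem tendsto_odd_div_two_pow (ha : HanoiRec a) :
    Tendsto (fun k => (a (2 * k + 1) : ℝ) / 2 ^ k) atTop (𝓝 (38 / 7)) := by
  refine tendsto_div_two_pow_of_abs_sub_le (α := 2) (β := 5) fun k => ?_
  have h : (21 * a (2 * k + 1) + 14 * (2 * k + 1) + hanoiCorrection (2 * k + 1) : ℝ) =
      114 * 2 ^ k := by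
    exact_mod_cast (ha.closed_form k).2
  have hd : (hanoiCorrection (2 * k + 1) : ℝ) ≤ 81 := by exact_mod_cast hanoiCorrection_le _
  rw [abs_le]
  constructor <;> linarith [(hanoiCorrection (2 * k + 1)).cast_nonneg (α := ℝ)]

theorem tendsto_odd_pred_div_two_pow (ha : HanoiRec a) :
    Tendsto (fun k => (a (2 * k - 1) : ℝ) / 2 ^ k) atTop (𝓝 (19 / 7)) := by
  have h := (ha.tendsto_odd_div_two_pow.comp (tendsto_sub_atTop_nat 1)).div_const 2
  rw [show (38 / 7 : ℝ) / 2 = 19 / 7 by norm_num] at h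
  refine h.congr' ?_
  filter_upwards [eventually_ge_atTop 1] with k hk
  obtain ⟨i, rfl⟩ := Nat.exists_eq_add_of_le' hk
  simp [pow_succ, div_div, show 2 * (i + 1) - 1 = 2 * i + 1 by omega]

end HanoiRec

/-- Asymptotic subsequence ratios for the full-tower transfer sequence `a`:
`a(2k)/a(2k-1) → 27/19` and `a(2k+1)/a(2k) → 38/27`. -/
theorem stmt4 (a : ℕ → ℕ)
    (ha0 : a 0 = 0) (ha1 : a 1 = 1) (ha2 : a 2 = 3) (ha3 : a 3 = 5)
    (hae : ∀ n, 4 ≤ n → Even n → a n = a (n - 3) + 5 * 2 ^ ((n - 2) / 2) - 2)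
    (hao : ∀ n, 4 ≤ n → Odd n → a n = a (n - 3) + 7 * 2 ^ ((n - 3) / 2) - 2) :
    Tendsto (fun k : ℕ => (a (2 * k) : ℝ) / (a (2 * k - 1) : ℝ)) atTop
      (nhds (27 / 19)) ∧
    Tendsto (fun k : ℕ => (a (2 * k + 1) : ℝ) / (a (2 * k) : ℝ)) atTop
      (nhds (38 / 27)) := by
  have ha : HanoiRec a := ⟨ha0, ha1, ha2, ha3, hae, hao⟩
  have hw (k : ℕ) : (2 : ℝ) ^ k ≠ 0 := by positivity
  constructor
  · convert tendsto_div_of_tendsto_div_of_tendsto_div hw ha.tendsto_even_div_two_pow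
      ha.tendsto_odd_pred_div_two_pow (by norm_num) using 2
    norm_num
  · convert tendsto_div_of_tendsto_div_of_tendsto_div hw ha.tendsto_odd_div_two_pow
      ha.tendsto_even_div_two_pow (by norm_num) using 2
    norm_num
end

section
/- Define a by a(0)=0, a(1)=1, a(2)=3, a(3)=5, and for n≥4: a(n)=a(n-3)+5·2^((n-2)/2)−2 if n even, a(n)=a(n-3)+7·2^((n-3)/2)−2 if n odd. Then a(n)/a(n-2) → 2 as n→∞, and there exist positive constants C₁, C₂ such that C₁·(√2)^n ≤ a(n) ≤ C₂·(√2)^n for all n≥1. -/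
open Filter

/-- Half-exponential growth of the full-tower transfer sequence:
`a(n)/a(n-2) → 2`, and `a(n) = Θ((√2)^n)`. -/
theorem stmt5 (a : ℕ → ℕ)
    (ha0 : a 0 = 0) (ha1 : a 1 = 1) (ha2 : a 2 = 3) (ha3 : a 3 = 5)
    (hae : ∀ n, 4 ≤ n → Even n → a n = a (n - 3) + 5 * 2 ^ ((n - 2) / 2) - 2)
    (hao : ∀ n, 4 ≤ n → Odd n → a n = a (n - 3) + 7 * 2 ^ ((n - 3) / 2) - 2) :
    Tendsto (fun n : ℕ => (a n : ℝ) / (a (n - 2) : ℝ)) atTop (nhds 2) ∧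
    ∃ C₁ C₂ : ℝ, 0 < C₁ ∧ 0 < C₂ ∧
      ∀ n, 1 ≤ n → C₁ * Real.sqrt 2 ^ n ≤ (a n : ℝ) ∧
        (a n : ℝ) ≤ C₂ * Real.sqrt 2 ^ n := by
  -- Key identity: a(n+2) = 2*a(n) + (3 + 2*(n/3))
  have key : ∀ n, a (n + 2) = 2 * a n + (3 + 2 * (n / 3)) := by
    intro n
    induction n using Nat.strong_induction_on with
    | _ n ih =>
    match n, ih with
    | 0, _ => simp [ha2, ha0]
    | 1, _ => simp [ha3, ha1]
    | 2, _ =>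
      have h4 := hae 4 (by norm_num) (by decide)
      norm_num at h4
      rw [show (2:ℕ)+2 = 4 from rfl, h4, ha1, ha2]
    | 3, _ =>
      have h5 := hao 5 (by norm_num) (by decide)
      norm_num at h5
      rw [show (3:ℕ)+2 = 5 from rfl, h5, ha2, ha3]
    | (m+4), ih =>
      have ih1 : a (m+3) = 2 * a (m+1) + (3 + 2 * ((m+1) / 3)) := by
        have h := ih (m+1) (by omega)
        rwa [show m+1+2 = m+3 from by omega] at h
      rcases Nat.even_or_odd m with ⟨j, hj⟩ | ⟨j, hj⟩
      · subst hj
        have h1 := hae (j+j+6) (by omega) ⟨j+3, by ring⟩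
        have h2 := hae (j+j+4) (by omega) ⟨j+2, by ring⟩
        rw [show (j+j+6)-3 = j+j+3 from by omega,
            show ((j+j+6)-2)/2 = j+2 from by omega] at h1
        rw [show (j+j+4)-3 = j+j+1 from by omega,
            show ((j+j+4)-2)/2 = j+1 from by omega] at h2
        rw [show j+j+4+2 = j+j+6 from by omega]
        have hp : (2:ℕ)^(j+2) = 2^(j+1) * 2 := pow_succ 2 (j+1)
        have hp1 : 1 ≤ (2:ℕ)^(j+1) := Nat.one_le_two_pow
        omega
      · subst hj
        have h1 := hao (2*j+1+6) (by omega) ⟨j+3, by ring⟩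
        have h2 := hao (2*j+1+4) (by omega) ⟨j+2, by ring⟩
        rw [show ((2*j+1+6)-3)/2 = j+2 from by omega,
            show (2*j+1+6)-3 = 2*j+1+3 from by omega] at h1
        rw [show ((2*j+1+4)-3)/2 = j+1 from by omega,
            show (2*j+1+4)-3 = 2*j+1+1 from by omega] at h2
        rw [show 2*j+1+4+2 = 2*j+1+6 from by omega]
        have hp : (2:ℕ)^(j+2) = 2^(j+1) * 2 := pow_succ 2 (j+1)
        have hp1 : 1 ≤ (2:ℕ)^(j+1) := Nat.one_le_two_pow
        omega
  -- ℕ lower bounds along parities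
  have low : ∀ k, 2^k ≤ a (2*k+1) ∧ 3 * 2^k ≤ a (2*k+2) := by
    intro k
    induction k with
    | zero => simp [ha1, ha2]
    | succ k ih =>
      have h1 := key (2*k+1)
      have h2 := key (2*k+2)
      rw [show 2*k+1+2 = 2*(k+1)+1 from by omega] at h1
      rw [show 2*k+2+2 = 2*(k+1)+2 from by omega] at h2
      have hp : (2:ℕ)^(k+1) = 2^k * 2 := pow_succ 2 k
      omega
  -- Real setup
  set s : ℝ := Real.sqrt 2 with hs
  have hs2 : s ^ 2 = 2 := Real.sq_sqrt (by norm_num)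
  have hs0 : 0 < s := Real.sqrt_pos.mpr (by norm_num)
  have hs1 : 1 < s := by nlinarith
  have hsle2 : s ≤ 2 := by nlinarith
  -- Real lower bound
  have lowR : ∀ n, 1 ≤ n → (1/2 : ℝ) * s ^ n ≤ (a n : ℝ) := by
    intro n hn
    rcases Nat.even_or_odd n with ⟨k, hk⟩ | ⟨k, hk⟩
    · have hk1 : 1 ≤ k := by omega
      have hl := (low (k-1)).2
      rw [show 2*(k-1)+2 = n from by omega] at hl
      have hcast : (3:ℝ) * 2^(k-1) ≤ (a n : ℝ) := by exact_mod_cast hl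
      have hpow : s ^ n = (2:ℝ) ^ (k-1) * 2 := by
        rw [show n = 2*((k-1)+1) from by omega, pow_mul, hs2, pow_succ]
      rw [hpow]
      have : (0:ℝ) < 2^(k-1) := by positivity
      nlinarith
    · have hl := (low k).1
      rw [show 2*k+1 = n from by omega] at hl
      have hcast : ((2:ℝ))^k ≤ (a n : ℝ) := by exact_mod_cast hl
      have hpow : s ^ n = (2:ℝ) ^ k * s := by
        rw [show n = 2*k+1 from by omega, pow_succ, pow_mul, hs2]
      rw [hpow]
      have : (0:ℝ) < 2^k := by positivity
      nlinarith
  -- Real upper bound (with slack for induction)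
  have hs3 : s ^ 3 = 2 * s := by rw [show s^3 = s^2*s from by ring, hs2]
  have hs4 : s ^ 4 = 4 := by rw [show s^4 = (s^2)^2 from by ring, hs2]; norm_num
  have hs5 : s ^ 5 = 4 * s := by rw [show s^5 = s^4*s from by ring, hs4]
  have upR : ∀ n, 1 ≤ n → (a n : ℝ) + ((n : ℝ) + 3) ≤ 5 * s ^ n := by
    intro n
    induction n using Nat.strong_induction_on with
    | _ n ih =>
    intro hn
    match n, ih with
    | 1, _ => rw [ha1]; push_cast; rw [pow_one]; nlinarith
    | 2, _ => rw [ha2]; push_cast; rw [hs2]; norm_num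
    | 3, _ => rw [ha3]; push_cast; rw [hs3]; nlinarith
    | 4, _ =>
      have h4 : a 4 = 9 := by
        have := hae 4 (by norm_num) (by decide)
        norm_num at this; rw [this, ha1]
      rw [h4]; push_cast; rw [hs4]; norm_num
    | 5, _ =>
      have h5 : a 5 = 15 := by
        have := hao 5 (by norm_num) (by decide)
        norm_num at this; rw [this, ha2]
      rw [h5]; push_cast; rw [hs5]; nlinarith
    | (m+6), ih =>
      have ihm := ih (m+4) (by omega) (by omega)
      have hk := key (m+4)
      rw [show m+4+2 = m+6 from by omega] at hk
      have hdle : 2 * ((m+4)/3) ≤ m + 2 := by omega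
      have hkR : (a (m+6) : ℝ) = 2 * (a (m+4) : ℝ) + (3 + 2 * (((m+4)/3 : ℕ) : ℝ)) := by
        exact_mod_cast hk
      have hdleR : 2 * (((m+4)/3 : ℕ) : ℝ) ≤ (m:ℝ) + 2 := by exact_mod_cast hdle
      have hpow : s ^ (m+6) = s ^ (m+4) * 2 := by
        rw [show m+6 = (m+4)+2 from by omega, pow_add, hs2]
      rw [hpow]
      push_cast at ihm ⊢
      nlinarith
  -- Positivity of a n for n ≥ 1
  have apos : ∀ n, 1 ≤ n → (0:ℝ) < (a n : ℝ) := by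
    intro n hn
    have := lowR n hn
    have : (0:ℝ) < (1/2) * s ^ n := by positivity
    linarith [lowR n hn]
  -- Tendsto part
  have htend : Tendsto (fun n : ℕ => (a n : ℝ) / (a (n - 2) : ℝ)) atTop (nhds 2) := by
    rw [← tendsto_add_atTop_iff_nat 3]
    set r : ℝ := 1 / s with hr
    have hr0 : 0 ≤ r := by positivity
    have hr1 : r < 1 := by rw [hr, div_lt_one hs0]; exact hs1
    have hg0 : Tendsto (fun n : ℕ => (2*(n:ℝ)+8) * r^(n+1)) atTop (nhds 0) := by
      have h1 := tendsto_self_mul_const_pow_of_lt_one hr0 hr1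
      have h2 := tendsto_pow_atTop_nhds_zero_of_lt_one hr0 hr1
      have h3 := (h1.const_mul (2*r)).add (h2.const_mul (8*r))
      simp only [mul_zero, add_zero] at h3
      convert h3 using 2 with n
      ring
    have hH : Tendsto (fun n : ℕ => 2 + (2*(n:ℝ)+8) * r^(n+1)) atTop (nhds 2) := by
      simpa using hg0.const_add 2
    have setup : ∀ n : ℕ, (a (n+3) : ℝ) = 2 * (a (n+1) : ℝ) + (3 + 2 * ((((n+1)/3 : ℕ)) : ℝ)) := by
      intro n
      have hk := key (n+1)
      rw [show n+1+2 = n+3 from by omega] at hk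
      exact_mod_cast hk
    refine tendsto_of_tendsto_of_tendsto_of_le_of_le'
      (tendsto_const_nhds : Tendsto (fun _ : ℕ => (2:ℝ)) atTop (nhds 2)) hH
      (Eventually.of_forall ?_) (Eventually.of_forall ?_)
    · intro n
      have he : n + 3 - 2 = n + 1 := by omega
      rw [he]
      have hA : (0:ℝ) < (a (n+1) : ℝ) := apos (n+1) (by omega)
      have hkR := setup n
      have hDnn : (0:ℝ) ≤ 3 + 2 * ((((n+1)/3 : ℕ)) : ℝ) := by positivity
      rw [le_div_iff₀ hA, hkR]; linarith
    · intro n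
      have he : n + 3 - 2 = n + 1 := by omega
      rw [he]
      have hA : (0:ℝ) < (a (n+1) : ℝ) := apos (n+1) (by omega)
      have hkR := setup n
      rw [div_le_iff₀ hA, hkR]
      have hDle : 3 + 2 * ((n+1)/3) ≤ n + 4 := by omega
      have hDleR : 3 + 2 * ((((n+1)/3 : ℕ)) : ℝ) ≤ (n:ℝ) + 4 := by exact_mod_cast hDle
      have hAlb : (1/2 : ℝ) * s ^ (n+1) ≤ (a (n+1) : ℝ) := lowR (n+1) (by omega)
      have hrs : r ^ (n+1) * s ^ (n+1) = 1 := by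
        rw [hr, one_div, ← mul_pow, inv_mul_cancel₀ (ne_of_gt hs0), one_pow]
      have hrpos : (0:ℝ) < r ^ (n+1) := by positivity
      have hspos : (0:ℝ) < s ^ (n+1) := by positivity
      -- need: 2*A + D ≤ (2 + (2n+8)*r^(n+1)) * A
      -- i.e. D ≤ (2n+8)*r^(n+1)*A ; and r^(n+1)*A ≥ r^(n+1)*(1/2)s^(n+1) = 1/2
      have h1 : (1/2 : ℝ) ≤ r^(n+1) * (a (n+1) : ℝ) := by
        calc (1/2 : ℝ) = r^(n+1) * ((1/2) * s^(n+1)) := by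
              rw [← mul_assoc, mul_comm (r^(n+1)) (1/2:ℝ), mul_assoc, hrs, mul_one]
          _ ≤ r^(n+1) * (a (n+1) : ℝ) := by
              exact mul_le_mul_of_nonneg_left hAlb (le_of_lt hrpos)
      nlinarith
  refine ⟨htend, 1/2, 5, by norm_num, by norm_num, fun n hn => ⟨lowR n hn, ?_⟩⟩
  have := upR n hn
  have hn3 : (0:ℝ) ≤ (n:ℝ) + 3 := by positivity
  linarith
end

section
/- Define E by E(0)=0 and E(n)=3·E(n-1)+2^(⌊n/2⌋+1)+1 for n≥1. Then for all n≥0: if n is even, E(n)=(3^(n+3)−20·2^(n/2)−7)/14, and if n is odd, E(n)=(3^(n+3)−32·2^((n-1)/2)−7)/14. -/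
/-- Closed form for the edge count `E(n)` of the parity-constrained Hanoi graph:
for even `n`, `14·E(n) = 3^(n+3) − 20·2^(n/2) − 7`, and for odd `n`,
`14·E(n) = 3^(n+3) − 32·2^((n-1)/2) − 7` (stated subtraction-free over `ℕ`). -/
theorem stmt6 (E : ℕ → ℕ)
    (hE0 : E 0 = 0)
    (hE : ∀ n, 1 ≤ n → E n = 3 * E (n - 1) + 2 ^ (n / 2 + 1) + 1) :
    ∀ n,
      (Even n → 14 * E n + 20 * 2 ^ (n / 2) + 7 = 3 ^ (n + 3)) ∧
      (Odd n → 14 * E n + 32 * 2 ^ ((n - 1) / 2) + 7 = 3 ^ (n + 3)) := by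
  intro n
  induction n with
  | zero =>
    constructor
    · intro _; simp [hE0]
    · intro h; exact absurd h (by simp)
  | succ n ih =>
    have h1 := hE (n + 1) (by omega)
    simp only [Nat.add_sub_cancel] at h1
    rcases Nat.even_or_odd n with ⟨k, hk⟩ | ⟨k, hk⟩
    · subst hk
      have hd1 : (k + k) / 2 = k := by omega
      have hd2 : (k + k + 1) / 2 = k := by omega
      have hih := ih.1 ⟨k, rfl⟩
      rw [hd1] at hih
      rw [hd2] at h1
      constructor
      · intro h; obtain ⟨m, hm⟩ := h; omega
      · intro _
        have e1 : (2 : ℕ) ^ (k + 1) = 2 * 2 ^ k := by ring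
        have e2 : (3 : ℕ) ^ (k + k + 1 + 3) = 3 * 3 ^ (k + k + 3) := by ring
        simp only [Nat.add_sub_cancel, hd1]
        rw [e2]
        rw [e1] at h1
        omega
    · subst hk
      have hd1 : (2 * k + 1 - 1) / 2 = k := by omega
      have hd2 : (2 * k + 1 + 1) / 2 = k + 1 := by omega
      have hih := ih.2 ⟨k, rfl⟩
      rw [hd1] at hih
      rw [hd2] at h1
      constructor
      · intro _
        have e1 : (2 : ℕ) ^ (k + 1 + 1) = 4 * 2 ^ k := by ring
        have e2 : (3 : ℕ) ^ (2 * k + 1 + 1 + 3) = 3 * 3 ^ (2 * k + 1 + 3) := by ring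
        have e3 : (2 : ℕ) ^ (k + 1) = 2 * 2 ^ k := by ring
        rw [hd2, e2, e3]
        rw [e1] at h1
        omega
      · intro h
        rw [Nat.odd_iff] at h; omega
end

section
/- Define E by E(0)=0 and E(n)=3·E(n-1)+2^(⌊n/2⌋+1)+1 for n≥1. Then the average degree 2·E(n)/3^n converges to 27/7 as n→∞, and 2·E(n)/3^n < 27/7 for all n≥1. -/
open Filter

/-- The average degree `2·E(n)/3^n` of the parity-constrained Hanoi graph `P^n`
converges to `27/7` and is strictly below `27/7` for every `n ≥ 1`. -/
theorem stmt8 (E : ℕ → ℕ)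
    (hE0 : E 0 = 0)
    (hE : ∀ n, 1 ≤ n → E n = 3 * E (n - 1) + 2 ^ (n / 2 + 1) + 1) :
    Tendsto (fun n : ℕ => 2 * (E n : ℝ) / 3 ^ n) atTop (nhds (27 / 7)) ∧
    ∀ n, 1 ≤ n → 2 * (E n : ℝ) / 3 ^ n < 27 / 7 := by
  set d : ℕ → ℝ := fun n => if Even n then 20 else 32 with hd
  have hd32 : ∀ n, d n ≤ 32 := by intro n; simp only [hd]; split <;> norm_num
  have hdpos : ∀ n, (0 : ℝ) < d n := by intro n; simp only [hd]; split <;> norm_num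
  have key : ∀ n, (E n : ℝ) = (27 * 3 ^ n - d n * 2 ^ (n / 2) - 7) / 14 := by
    intro n
    induction n with
    | zero => simp only [hE0, hd]; norm_num
    | succ n ih =>
      have h1 := hE (n + 1) (by omega)
      simp only [Nat.add_sub_cancel] at h1
      rcases Nat.even_or_odd n with ⟨m, hm⟩ | ⟨m, hm⟩
      · subst hm
        have e1 : (m + m + 1) / 2 = m := by omega
        have e2 : (m + m) / 2 = m := by omega
        have dv1 : d (m + m) = 20 := by simp only [hd]; rw [if_pos ⟨m, rfl⟩]
        have dv2 : d (m + m + 1) = 32 := by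
          simp only [hd]; rw [if_neg]
          simp [Nat.even_add_one, parity_simps]
        rw [h1]; push_cast [ih, e1, e2, dv1, dv2]; ring
      · subst hm
        have e1 : (2 * m + 1 + 1) / 2 = m + 1 := by omega
        have e2 : (2 * m + 1) / 2 = m := by omega
        have dv1 : d (2 * m + 1) = 32 := by
          simp only [hd]; rw [if_neg]; simp [parity_simps]
        have dv2 : d (2 * m + 1 + 1) = 20 := by
          simp only [hd]; rw [if_pos ⟨m + 1, by ring⟩]
        rw [h1]; push_cast [ih, e1, e2, dv1, dv2]
        rw [pow_succ]; ring
  have eq2 : ∀ n, 2 * (E n : ℝ) / 3 ^ n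
      = 27 / 7 - (d n * 2 ^ (n / 2) + 7) / (7 * 3 ^ n) := by
    intro n
    rw [key n]
    have h3 : (3 : ℝ) ^ n ≠ 0 := by positivity
    field_simp
    ring
  have gpos : ∀ n, (0 : ℝ) < (d n * 2 ^ (n / 2) + 7) / (7 * 3 ^ n) := by
    intro n
    apply div_pos
    · have h2 : (0 : ℝ) < 2 ^ (n / 2) := by positivity
      nlinarith [hdpos n]
    · positivity
  constructor
  · have hfun : (fun n : ℕ => 2 * (E n : ℝ) / 3 ^ n)
        = fun n : ℕ => 27 / 7 - (d n * 2 ^ (n / 2) + 7) / (7 * 3 ^ n) :=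
      funext eq2
    rw [hfun]
    have h0 : Tendsto (fun n : ℕ => (d n * 2 ^ (n / 2) + 7) / (7 * 3 ^ n))
        atTop (nhds 0) := by
      have hub : ∀ n : ℕ, (d n * 2 ^ (n / 2) + 7) / (7 * 3 ^ n)
          ≤ 39 / 7 * (2 / 3 : ℝ) ^ n := by
        intro n
        have h2 : (2 : ℝ) ^ (n / 2) ≤ 2 ^ n :=
          pow_le_pow_right₀ (by norm_num) (Nat.div_le_self n 2)
        have h2p : (0 : ℝ) < 2 ^ (n / 2) := by positivity
        have h2n : (1 : ℝ) ≤ 2 ^ n := one_le_pow₀ (by norm_num)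
        rw [div_le_iff₀ (by positivity)]
        have hr : (39 : ℝ) / 7 * (2 / 3) ^ n * (7 * 3 ^ n) = 39 * 2 ^ n := by
          rw [div_pow]
          have h3 : (3 : ℝ) ^ n ≠ 0 := by positivity
          field_simp
        rw [hr]
        nlinarith [hd32 n, hdpos n]
      have hlim : Tendsto (fun n : ℕ => 39 / 7 * (2 / 3 : ℝ) ^ n) atTop (nhds 0) := by
        have := (tendsto_pow_atTop_nhds_zero_of_lt_one
          (by norm_num : (0:ℝ) ≤ 2/3) (by norm_num : (2/3:ℝ) < 1)).const_mul (39/7 : ℝ)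
        simpa using this
      exact squeeze_zero (fun n => (gpos n).le) hub hlim
    have := (tendsto_const_nhds (x := (27 / 7 : ℝ))).sub h0
    simpa using this
  · intro n _
    rw [eq2 n]
    have := gpos n
    linarith
end

section
/- Define the parity-constrained Hanoi graph P^n on vertex set V(P^n) = {s ∈ {0,1,2,3}^n : s_d ≠ 2 for even d, s_d ≠ 1 for odd d}, where s and t are adjacent iff they differ in exactly one coordinate d, both values s_d, t_d lie in the allowed peg set of disc d, and no coordinate k < d of the common part equals s_d or t_d. Then for all n ≥ 1, the minimum degree of P^n equals 2. -/
/-!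
Disc `1` always lies on top of its peg and its allowed pegs are `0, 2, 3`, so it can always
move to either of the two allowed pegs it does not occupy: every vertex has degree at least `2`.
When all discs lie on peg `0`, disc `1` covers every other disc, so these two moves are the only
ones and that vertex has degree exactly `2`.
-/

/-- Parity constraint on a state: disc `d+1` (labelled `1,…,n`) may not sit on
peg `2` if it is even, nor on peg `1` if it is odd. -/
def pegOK (n : ℕ) (s : Fin n → Fin 4) : Prop :=
  ∀ d : Fin n, (Even ((d : ℕ) + 1) → s d ≠ 2) ∧ (Odd ((d : ℕ) + 1) → s d ≠ 1)

instance (n : ℕ) : DecidablePred (pegOK n) := fun s => by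
  unfold pegOK; infer_instance

/-- Vertices of the parity-constrained Hanoi graph `P^n`. -/
abbrev PVertex (n : ℕ) := {s : Fin n → Fin 4 // pegOK n s}

/-- The parity-constrained four-peg Hanoi graph `P^n`: two states are adjacent iff
they differ in exactly one coordinate `d` (a legal move of disc `d+1`) and no
smaller disc sits on either of the two pegs involved. -/
def PGraph (n : ℕ) : SimpleGraph (PVertex n) where
  Adj s t := ∃ d : Fin n,
    s.1 d ≠ t.1 d ∧ (∀ k, k ≠ d → s.1 k = t.1 k) ∧
    (∀ k, k < d → s.1 k ≠ s.1 d ∧ s.1 k ≠ t.1 d)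
  symm := by
    constructor
    rintro s t ⟨d, hne, heq, hlt⟩
    refine ⟨d, hne.symm, fun k hk => (heq k hk).symm, fun k hk => ?_⟩
    have h := hlt k hk
    rw [← heq k (ne_of_lt hk)]
    exact ⟨h.2, h.1⟩
  loopless := by constructor; rintro s ⟨d, hne, -⟩; exact hne rfl

instance (n : ℕ) : DecidableRel (PGraph n).Adj := fun s t =>
  decidable_of_iff (∃ d : Fin n,
    s.1 d ≠ t.1 d ∧ (∀ k, k ≠ d → s.1 k = t.1 k) ∧
    (∀ k, k < d → s.1 k ≠ s.1 d ∧ s.1 k ≠ t.1 d)) Iff.rfl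

namespace PGraph

open SimpleGraph Finset

variable {m : ℕ}

lemma smallest_ne_one (s : PVertex (m + 1)) : s.1 0 ≠ 1 :=
  (s.2 0).2 (by simp)

def moveSmallest (s : PVertex (m + 1)) (a : Fin 4) (ha : a ≠ 1) : PVertex (m + 1) :=
  ⟨Function.update s.1 0 a, fun d => by
    rcases eq_or_ne d 0 with rfl | hd
    · simp [ha]
    · simpa [Function.update_of_ne hd] using s.2 d⟩

@[simp]
lemma moveSmallest_apply_zero (s : PVertex (m + 1)) (a : Fin 4) (ha : a ≠ 1) :
    (moveSmallest s a ha).1 0 = a := by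
  simp [moveSmallest]

lemma adj_moveSmallest (s : PVertex (m + 1)) {a : Fin 4} (ha : a ≠ 1) (hsa : s.1 0 ≠ a) :
    (PGraph (m + 1)).Adj s (moveSmallest s a ha) :=
  ⟨0, by simpa using hsa, fun k hk => (Function.update_of_ne hk ..).symm,
    fun k hk => absurd hk (Fin.not_lt_zero k)⟩

lemma two_le_degree (s : PVertex (m + 1)) : 2 ≤ (PGraph (m + 1)).degree s := by
  obtain ⟨a, b, hab, ha, hb, hsa, hsb⟩ : ∃ a b : Fin 4,
      a ≠ b ∧ a ≠ 1 ∧ b ≠ 1 ∧ s.1 0 ≠ a ∧ s.1 0 ≠ b := by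
    have key : ∀ x : Fin 4, x ≠ 1 →
        ∃ a b : Fin 4, a ≠ b ∧ a ≠ 1 ∧ b ≠ 1 ∧ x ≠ a ∧ x ≠ b := by decide
    exact key _ (smallest_ne_one s)
  rw [← card_neighborFinset_eq_degree]
  exact one_lt_card.mpr
    ⟨_, (mem_neighborFinset ..).2 (adj_moveSmallest s ha hsa),
      _, (mem_neighborFinset ..).2 (adj_moveSmallest s hb hsb),
      fun h => hab (by simpa using congrArg (fun t : PVertex (m + 1) => t.1 0) h)⟩

def allZero : PVertex (m + 1) :=
  ⟨fun _ => 0, fun _ => ⟨fun _ => by simp, fun _ => by simp⟩⟩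

lemma eq_update_of_adj_allZero {t : PVertex (m + 1)} (h : (PGraph (m + 1)).Adj allZero t) :
    t.1 = Function.update (fun _ => 0) 0 (t.1 0) ∧ t.1 0 ∈ ({2, 3} : Finset (Fin 4)) := by
  obtain ⟨d, hne, heq, hlt⟩ := h
  obtain rfl : d = 0 := by
    by_contra hd
    exact (hlt 0 (Fin.pos_of_ne_zero hd)).1 rfl
  refine ⟨funext fun k => ?_, ?_⟩
  · rcases eq_or_ne k 0 with rfl | hk
    · simp
    · simp [hk, ← heq k hk, allZero]
  · have key : ∀ x : Fin 4, x ≠ 0 → x ≠ 1 → x ∈ ({2, 3} : Finset (Fin 4)) := by decide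
    exact key _ (Ne.symm hne) (smallest_ne_one t)

lemma degree_allZero : (PGraph (m + 1)).degree allZero = 2 := by
  refine le_antisymm ?_ (two_le_degree _)
  have hnbr {t} (ht : t ∈ (PGraph (m + 1)).neighborFinset allZero) :=
    eq_update_of_adj_allZero ((mem_neighborFinset ..).1 ht)
  rw [← card_neighborFinset_eq_degree]
  calc #((PGraph (m + 1)).neighborFinset allZero)
      ≤ #({2, 3} : Finset (Fin 4)) :=
        card_le_card_of_injOn (fun t => t.1 0) (fun t ht => (hnbr ht).2)
          fun t ht u hu h => Subtype.ext (by rw [(hnbr ht).1, (hnbr hu).1]; exact congrArg _ h)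
    _ = 2 := rfl

end PGraph

open PGraph SimpleGraph in
/-- The minimum degree of the parity-constrained Hanoi graph `P^n` equals `2`. -/
theorem stmt10 : ∀ n : ℕ, 1 ≤ n → (PGraph n).minDegree = 2 := by
  intro n hn
  obtain ⟨m, rfl⟩ := Nat.exists_eq_add_of_le' hn
  have : Nonempty (PVertex (m + 1)) := ⟨allZero⟩
  exact le_antisymm (degree_allZero ▸ minDegree_le_degree _ _)
    (le_minDegree_of_forall_le_degree _ _ two_le_degree)
end

section
/- For the parity-constrained Hanoi graph P^n, the maximum degree satisfies: Δ(P^1)=2, Δ(P^2)=4, and Δ(P^n)=5 for all n≥3. -/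
/-! A legal move is determined by the pair of pegs it involves: of the top discs of the two pegs,
the smaller one moves onto the other peg. By the parity rule no disc may use both peg `1` and
peg `2`, so only five of the six pairs of pegs can carry a move and every degree is at most `5`.
For `n ≥ 3` the state `(2, 1, 0, …, 0)` has a move on each of these five pairs. -/

open Finset

namespace PGraph

variable {n : ℕ}

def PegAllowed (d : ℕ) (q : Fin 4) : Prop :=
  (Even (d + 1) → q ≠ 2) ∧ (Odd (d + 1) → q ≠ 1)

instance (d : ℕ) : DecidablePred (PegAllowed d) := fun q => by
  unfold PegAllowed; infer_instance

lemma PegAllowed.sym2_ne {d : ℕ} {a b : Fin 4} (ha : PegAllowed d a) (hb : PegAllowed d b) :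
    s(a, b) ≠ s(1, 2) := by
  intro h
  rcases Nat.even_or_odd (d + 1) with hd | hd <;> simp_all [PegAllowed]

lemma pegOK_update (s : PVertex n) {d : Fin n} {q : Fin 4} (hq : PegAllowed d q) :
    pegOK n (Function.update s.1 d q) := by
  intro k
  rcases eq_or_ne k d with rfl | hk
  · simpa [PegAllowed] using hq
  · simpa [Function.update_of_ne hk] using s.2 k

/-- `p = (d, q)`: disc `d` may legally move to peg `q`. -/
def IsMove (s : PVertex n) (p : Fin n × Fin 4) : Prop :=
  p.2 ≠ s.1 p.1 ∧ PegAllowed p.1 p.2 ∧ ∀ k < p.1, s.1 k ≠ s.1 p.1 ∧ s.1 k ≠ p.2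

instance (s : PVertex n) : DecidablePred (IsMove s) := fun p => by
  unfold IsMove; infer_instance

def moves (s : PVertex n) : Finset (Fin n × Fin 4) := univ.filter (IsMove s)

lemma mem_moves {s : PVertex n} {p : Fin n × Fin 4} : p ∈ moves s ↔ IsMove s p := by
  simp [moves]

def applyMove (s : PVertex n) (p : Fin n × Fin 4) (hp : IsMove s p) : PVertex n :=
  ⟨Function.update s.1 p.1 p.2, pegOK_update s hp.2.1⟩

lemma degree_eq_card_moves (s : PVertex n) : (PGraph n).degree s = #(moves s) := by
  refine (card_bij (fun p hp => applyMove s p (mem_moves.1 hp)) ?_ ?_ ?_).symm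
  · rintro ⟨d, q⟩ hp
    obtain ⟨hne, -, hlt⟩ := mem_moves.1 hp
    rw [SimpleGraph.mem_neighborFinset]
    exact ⟨d, by simpa [applyMove] using hne.symm,
      fun k hk => by simp [applyMove, Function.update_of_ne hk],
      fun k hk => by simpa [applyMove] using hlt k hk⟩
  · rintro ⟨d, q⟩ hp ⟨d', q'⟩ _ hdq
    have hd := congrFun (congrArg Subtype.val hdq) d
    simp only [applyMove, Function.update_self] at hd
    rcases eq_or_ne d d' with rfl | hdd'
    · simpa using hd
    · exact absurd (hd.trans (Function.update_of_ne hdd' _ _)) (mem_moves.1 hp).1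
  · intro t ht
    obtain ⟨d, hne, heq, hlt⟩ := (SimpleGraph.mem_neighborFinset _ _ _).1 ht
    refine ⟨(d, t.1 d), mem_moves.2 ⟨hne.symm, t.2 d, hlt⟩, Subtype.ext (funext fun k => ?_)⟩
    rcases eq_or_ne k d with rfl | hk
    · simp [applyMove]
    · simp [applyMove, Function.update_of_ne hk, heq k hk]

def movePegs (s : PVertex n) (p : Fin n × Fin 4) : Sym2 (Fin 4) := s(s.1 p.1, p.2)

lemma movePegs_injOn (s : PVertex n) : Set.InjOn (movePegs s) (moves s) := by
  rintro ⟨d, q⟩ hp ⟨d', q'⟩ hp' h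
  obtain ⟨hq, -, hlt⟩ := mem_moves.1 hp
  obtain ⟨-, -, hlt'⟩ := mem_moves.1 hp'
  simp only [movePegs, Sym2.eq_iff] at h hq hlt hlt'
  rcases h with ⟨hs, rfl⟩ | ⟨hs, hs'⟩ <;> rcases lt_trichotomy d d' with hd | rfl | hd
  · exact absurd hs (hlt' d hd).1
  · rfl
  · exact absurd hs.symm (hlt d' hd).1
  · exact absurd hs (hlt' d hd).2
  · exact absurd hs' hq
  · exact absurd hs'.symm (hlt d' hd).2

def movablePegPairs : Finset (Sym2 (Fin 4)) := univ.filter fun z => ¬z.IsDiag ∧ z ≠ s(1, 2)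

lemma movePegs_mem_movablePegPairs {s : PVertex n} {p : Fin n × Fin 4} (hp : p ∈ moves s) :
    movePegs s p ∈ movablePegPairs := by
  obtain ⟨hq, hallowed, -⟩ := mem_moves.1 hp
  simpa [movablePegPairs, movePegs, Ne.symm hq] using PegAllowed.sym2_ne (s.2 p.1) hallowed

lemma card_movablePegPairs : #movablePegPairs = 5 := by decide

lemma degree_le_five (s : PVertex n) : (PGraph n).degree s ≤ 5 := by
  rw [degree_eq_card_moves, ← card_movablePegPairs]
  exact card_le_card_of_injOn (movePegs s) (fun _ hp => movePegs_mem_movablePegPairs hp)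
    (movePegs_injOn s)

def peak : ℕ → Fin 4
  | 0 => 2
  | 1 => 1
  | _ + 2 => 0

lemma pegAllowed_peak : ∀ d, PegAllowed d (peak d)
  | 0 | 1 => by decide
  | _ + 2 => by simp [PegAllowed, peak]

def peakState (n : ℕ) : PVertex n := ⟨fun k => peak k, fun k => pegAllowed_peak k⟩

lemma isMove_peakState {i : ℕ} (hi : i < n) {q : Fin 4}
    (h : q ≠ peak i ∧ PegAllowed i q ∧ ∀ k < i, peak k ≠ peak i ∧ peak k ≠ q) :
    IsMove (peakState n) (⟨i, hi⟩, q) :=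
  ⟨h.1, h.2.1, fun k hk => h.2.2 k hk⟩

lemma five_le_card_moves_peakState (hn : 3 ≤ n) : 5 ≤ #(moves (peakState n)) := by
  let pegPairs : Finset (ℕ × Fin 4) := {(0, 0), (0, 3), (1, 0), (1, 3), (2, 3)}
  have hmoves : ∀ p ∈ pegPairs,
      p.2 ≠ peak p.1 ∧ PegAllowed p.1 p.2 ∧ ∀ k < p.1, peak k ≠ peak p.1 ∧ peak k ≠ p.2 := by
    decide
  have hsub : pegPairs ⊆ (moves (peakState n)).image fun p => ((p.1 : ℕ), p.2) := by
    rintro ⟨i, q⟩ hp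
    have hi : i < n := by simp only [pegPairs, mem_insert, mem_singleton] at hp; grind
    exact mem_image.2 ⟨(⟨i, hi⟩, q), mem_moves.2 (isMove_peakState hi (hmoves _ hp)), rfl⟩
  calc 5 = #pegPairs := by decide
    _ ≤ _ := card_le_card hsub
    _ ≤ _ := card_image_le

end PGraph

/-- Maximum degrees of the parity-constrained Hanoi graphs:
`Δ(P^1) = 2`, `Δ(P^2) = 4`, and `Δ(P^n) = 5` for `n ≥ 3`. -/
theorem stmt11 :
    (PGraph 1).maxDegree = 2 ∧ (PGraph 2).maxDegree = 4 ∧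
    ∀ n : ℕ, 3 ≤ n → (PGraph n).maxDegree = 5 := by
  refine ⟨by decide, by decide, fun n hn => le_antisymm ?_ ?_⟩
  · exact SimpleGraph.maxDegree_le_of_forall_degree_le _ _ PGraph.degree_le_five
  · calc 5 ≤ (PGraph n).degree (PGraph.peakState n) := by
          rw [PGraph.degree_eq_card_moves]; exact PGraph.five_le_card_moves_peakState hn
      _ ≤ (PGraph n).maxDegree := SimpleGraph.degree_le_maxDegree _ _
end

section
/- For all n ≥ 3, the parity-constrained Hanoi graph P^n is not planar; equivalently, P^3 contains a subdivision of K_{3,3} as a subgraph. -/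
/-- `G` contains a subdivision of `K_{3,3}`: six branch vertices (two triples) and
internally disjoint paths joining every vertex of one triple to every vertex of
the other, with internal vertices avoiding all branch vertices. -/
def HasK33Subdivision {V : Type*} (G : SimpleGraph V) : Prop :=
  ∃ b : Fin 3 ⊕ Fin 3 → V, Function.Injective b ∧
    ∃ w : ∀ i j : Fin 3, G.Walk (b (Sum.inl i)) (b (Sum.inr j)),
      (∀ i j, (w i j).IsPath) ∧
      (∀ i j, ∀ v ∈ (w i j).support, v ∈ Set.range b →
        v = b (Sum.inl i) ∨ v = b (Sum.inr j)) ∧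
      (∀ i j i' j', (i, j) ≠ (i', j') →
        ∀ v ∈ (w i j).support, v ∈ (w i' j').support → v ∈ Set.range b)

/-!
Writing a state of `P³` as the pegs of discs `1 2 3`, the vertices `002, 010, 012` and
`003, 032, 312` are the branch vertices of a `K₃,₃` subdivision in `P³` whose nine paths have
at most three internal vertices each. Parking the discs `4, …, n` on peg `0` embeds `P³` into
`P^n`, and a subdivision is carried along any injective graph homomorphism.
-/

open SimpleGraph

theorem HasK33Subdivision.map {V W : Type*} {G : SimpleGraph V} {H : SimpleGraph W}
    (f : G →g H) (hf : Function.Injective f) (hG : HasK33Subdivision G) :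
    HasK33Subdivision H := by
  obtain ⟨b, hb, w, hpath, hbranch, hdisj⟩ := hG
  have mem_range {u : V} : f u ∈ Set.range (f ∘ b) → u ∈ Set.range b := by
    rintro ⟨x, hx⟩
    exact ⟨x, hf hx⟩
  refine ⟨f ∘ b, hf.comp hb, fun i j => (w i j).map f, fun i j => (hpath i j).map hf, ?_, ?_⟩
  · intro i j v hv hvb
    rw [Walk.support_map, List.mem_map] at hv
    obtain ⟨u, hu, rfl⟩ := hv
    rcases hbranch i j u hu (mem_range hvb) with rfl | rfl
    exacts [Or.inl rfl, Or.inr rfl]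
  · intro i j i' j' hij v hv hv'
    rw [Walk.support_map, List.mem_map] at hv hv'
    obtain ⟨u, hu, rfl⟩ := hv
    obtain ⟨u', hu', hu'u⟩ := hv'
    rw [hf hu'u] at hu'
    obtain ⟨x, rfl⟩ := hdisj i j i' j' hij u hu hu'
    exact ⟨x, rfl⟩

namespace PGraph

variable {m : ℕ}

/-- Extend a state of `P^m` to `n` discs by putting the discs `m+1, …, n` on peg `0`, which is
allowed for every parity (and by forgetting the discs beyond `n` if `n < m`). -/
def pad (n : ℕ) (s : PVertex m) : PVertex n :=
  ⟨fun d => if hd : (d : ℕ) < m then s.1 ⟨d, hd⟩ else 0, fun d => by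
    by_cases hd : (d : ℕ) < m
    · simpa only [hd, dite_true] using s.2 ⟨d, hd⟩
    · simp only [hd, dite_false]
      exact ⟨fun _ => by decide, fun _ => by decide⟩⟩

theorem pad_apply_of_lt {n : ℕ} (s : PVertex m) {d : Fin n} (hd : (d : ℕ) < m) :
    (pad n s).1 d = s.1 ⟨d, hd⟩ := by
  simp [pad, hd]

theorem pad_apply_of_not_lt {n : ℕ} (s : PVertex m) {d : Fin n} (hd : ¬(d : ℕ) < m) :
    (pad n s).1 d = 0 := by
  simp [pad, hd]

variable {n : ℕ}

@[simp]
theorem pad_apply_castLE (h : m ≤ n) (s : PVertex m) (d : Fin m) :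
    (pad n s).1 (Fin.castLE h d) = s.1 d :=
  pad_apply_of_lt s d.2

theorem pad_injective (h : m ≤ n) : Function.Injective (pad (m := m) n) := by
  intro s t hst
  ext d : 2
  rw [← pad_apply_castLE h s, ← pad_apply_castLE h t, hst]

/-- Discs larger than all discs of `P^m` never block a move, so padding preserves moves. -/
def padHom (h : m ≤ n) : PGraph m →g PGraph n where
  toFun := pad n
  map_rel' := by
    rintro s t ⟨d, hne, hrest, hsmaller⟩
    refine ⟨Fin.castLE h d, by simpa using hne, fun k hk => ?_, fun k hk => ?_⟩
    · by_cases hkm : (k : ℕ) < m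
      · have hk' : (⟨k, hkm⟩ : Fin m) ≠ d := fun hkd => hk (by simp [← hkd])
        rw [pad_apply_of_lt s hkm, pad_apply_of_lt t hkm, hrest _ hk']
      · rw [pad_apply_of_not_lt s hkm, pad_apply_of_not_lt t hkm]
    · have hkm : (k : ℕ) < m := lt_trans hk d.2
      simpa [pad_apply_of_lt s hkm] using hsmaller ⟨k, hkm⟩ hk

end PGraph

def PVertex.ofPegs (a b c : Fin 4) (h : pegOK 3 ![a, b, c] := by decide) : PVertex 3 :=
  ⟨![a, b, c], h⟩

open PVertex

def k33BranchP3 : Fin 3 ⊕ Fin 3 → PVertex 3 :=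
  Sum.elim ![ofPegs 0 0 2, ofPegs 0 1 0, ofPegs 0 1 2]
    ![ofPegs 0 0 3, ofPegs 0 3 2, ofPegs 3 1 2]

def k33PathP3 :
    ∀ i j : Fin 3, (PGraph 3).Walk (k33BranchP3 (.inl i)) (k33BranchP3 (.inr j))
  | ⟨0, _⟩, ⟨0, _⟩ => .cons (by decide : (PGraph 3).Adj (ofPegs 0 0 2) (ofPegs 0 0 3)) .nil
  | ⟨0, _⟩, ⟨1, _⟩ =>
    .cons (by decide : (PGraph 3).Adj (ofPegs 0 0 2) (ofPegs 2 0 2)) <|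
    .cons (by decide : (PGraph 3).Adj (ofPegs 2 0 2) (ofPegs 2 3 2)) <|
    .cons (by decide : (PGraph 3).Adj (ofPegs 2 3 2) (ofPegs 0 3 2)) .nil
  | ⟨0, _⟩, ⟨2, _⟩ =>
    .cons (by decide : (PGraph 3).Adj (ofPegs 0 0 2) (ofPegs 3 0 2)) <|
    .cons (by decide : (PGraph 3).Adj (ofPegs 3 0 2) (ofPegs 3 1 2)) .nil
  | ⟨1, _⟩, ⟨0, _⟩ =>
    .cons (by decide : (PGraph 3).Adj (ofPegs 0 1 0) (ofPegs 2 1 0)) <|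
    .cons (by decide : (PGraph 3).Adj (ofPegs 2 1 0) (ofPegs 2 1 3)) <|
    .cons (by decide : (PGraph 3).Adj (ofPegs 2 1 3) (ofPegs 2 0 3)) <|
    .cons (by decide : (PGraph 3).Adj (ofPegs 2 0 3) (ofPegs 0 0 3)) .nil
  | ⟨1, _⟩, ⟨1, _⟩ =>
    .cons (by decide : (PGraph 3).Adj (ofPegs 0 1 0) (ofPegs 0 3 0)) <|
    .cons (by decide : (PGraph 3).Adj (ofPegs 0 3 0) (ofPegs 3 3 0)) <|
    .cons (by decide : (PGraph 3).Adj (ofPegs 3 3 0) (ofPegs 3 3 2)) <|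
    .cons (by decide : (PGraph 3).Adj (ofPegs 3 3 2) (ofPegs 0 3 2)) .nil
  | ⟨1, _⟩, ⟨2, _⟩ =>
    .cons (by decide : (PGraph 3).Adj (ofPegs 0 1 0) (ofPegs 3 1 0)) <|
    .cons (by decide : (PGraph 3).Adj (ofPegs 3 1 0) (ofPegs 3 1 2)) .nil
  | ⟨2, _⟩, ⟨0, _⟩ =>
    .cons (by decide : (PGraph 3).Adj (ofPegs 0 1 2) (ofPegs 0 1 3)) <|
    .cons (by decide : (PGraph 3).Adj (ofPegs 0 1 3) (ofPegs 3 1 3)) <|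
    .cons (by decide : (PGraph 3).Adj (ofPegs 3 1 3) (ofPegs 3 0 3)) <|
    .cons (by decide : (PGraph 3).Adj (ofPegs 3 0 3) (ofPegs 0 0 3)) .nil
  | ⟨2, _⟩, ⟨1, _⟩ => .cons (by decide : (PGraph 3).Adj (ofPegs 0 1 2) (ofPegs 0 3 2)) .nil
  | ⟨2, _⟩, ⟨2, _⟩ =>
    .cons (by decide : (PGraph 3).Adj (ofPegs 0 1 2) (ofPegs 2 1 2)) <|
    .cons (by decide : (PGraph 3).Adj (ofPegs 2 1 2) (ofPegs 3 1 2)) .nil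

theorem hasK33Subdivision_PGraph_three : HasK33Subdivision (PGraph 3) := by
  refine ⟨k33BranchP3, by decide, k33PathP3, fun i j => ?_, ?_, ?_⟩
  · rw [Walk.isPath_def]
    revert i j
    decide
  · simp only [Set.mem_range]
    decide
  · simp only [Set.mem_range]
    decide

/-- For all `n ≥ 3`, the parity-constrained Hanoi graph `P^n` contains a
subdivision of `K_{3,3}`, hence is not planar. -/
theorem stmt13 : ∀ n : ℕ, 3 ≤ n → HasK33Subdivision (PGraph n) := fun _ hn =>
  hasK33Subdivision_PGraph_three.map (PGraph.padHom hn) (PGraph.pad_injective hn)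
end

section
/- For all n ≥ 1, the clique number of the parity-constrained Hanoi graph P^n equals 3; in particular, P^n contains a triangle but no K_4. -/
def DifferOnlyAt {ι α : Type*} (s t : ι → α) (d : ι) : Prop :=
  s d ≠ t d ∧ ∀ k, k ≠ d → s k = t k

namespace DifferOnlyAt

variable {ι α : Type*} {f g h : ι → α} {d d' e : ι}

theorem eq_of_eqOn_compl (hg : DifferOnlyAt f g d) (hh : DifferOnlyAt f h d')
    (hgh : ∀ k, k ≠ e → g k = h k) : d = d' := by
  by_contra hne
  have hd : d = e := by_contra fun hde => hg.1 ((hh.2 d hne).trans (hgh d hde).symm)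
  have hd' : d' = e := by_contra fun hde => hh.1 ((hg.2 d' (Ne.symm hne)).trans (hgh d' hde))
  exact hne (hd.trans hd'.symm)

end DifferOnlyAt

def forbiddenPeg (d : ℕ) : Fin 4 := if Even (d + 1) then 2 else 1

theorem PVertex.ne_forbiddenPeg {n : ℕ} (s : PVertex n) (d : Fin n) :
    s.1 d ≠ forbiddenPeg d := by
  unfold forbiddenPeg
  split_ifs with h
  · exact (s.2 d).1 h
  · exact (s.2 d).2 (Nat.not_even_iff_odd.mp h)

namespace PGraph

variable {n : ℕ}

theorem exists_differOnlyAt_of_adj {s t : PVertex n} (h : (PGraph n).Adj s t) :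
    ∃ d, DifferOnlyAt s.1 t.1 d :=
  let ⟨d, hne, heq, _⟩ := h
  ⟨d, hne, heq⟩

theorem eqOn_compl_of_isClique {t : Finset (PVertex n)} (ht : (PGraph n).IsClique (t : Set _))
    {a b c : PVertex n} {d : Fin n} (ha : a ∈ t) (hb : b ∈ t) (hc : c ∈ t)
    (hab : DifferOnlyAt a.1 b.1 d) : ∀ k, k ≠ d → a.1 k = c.1 k := by
  rcases eq_or_ne a c with rfl | hac
  · exact fun _ _ => rfl
  obtain ⟨d', hac'⟩ := exists_differOnlyAt_of_adj (ht ha hc hac)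
  have hbc : ∃ e, ∀ k, k ≠ e → b.1 k = c.1 k := by
    rcases eq_or_ne b c with rfl | hne
    · exact ⟨d, fun _ _ => rfl⟩
    obtain ⟨e, he⟩ := exists_differOnlyAt_of_adj (ht hb hc hne)
    exact ⟨e, he.2⟩
  obtain ⟨e, hbc⟩ := hbc
  exact hab.eq_of_eqOn_compl hac' hbc ▸ hac'.2

theorem card_le_three_of_isClique {t : Finset (PVertex n)}
    (ht : (PGraph n).IsClique (t : Set _)) : t.card ≤ 3 := by
  rcases t.eq_empty_or_nonempty with rfl | ⟨a, ha⟩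
  · simp
  by_cases hsub : t ⊆ {a}
  · exact (Finset.card_le_card hsub).trans (by simp)
  obtain ⟨b, hb, hba⟩ := Finset.not_subset.mp hsub
  obtain ⟨d, hab⟩ := exists_differOnlyAt_of_adj
    (ht ha hb (Ne.symm (Finset.notMem_singleton.mp hba)))
  have hinj : Set.InjOn (fun s : PVertex n => s.1 d) t := by
    intro c hc c' hc' hcc'
    ext1; funext k
    by_cases hk : k = d
    · exact hk ▸ hcc'
    · rw [← eqOn_compl_of_isClique ht ha hb hc hab k hk,
        eqOn_compl_of_isClique ht ha hb hc' hab k hk]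
  calc t.card ≤ (Finset.univ.erase (forbiddenPeg d)).card :=
        Finset.card_le_card_of_injOn _ (fun s _ => by simpa using s.ne_forbiddenPeg d) hinj
    _ = 3 := by simp

theorem cliqueFree_four : (PGraph n).CliqueFree 4 := fun t ht =>
  absurd (card_le_three_of_isClique ht.isClique) (by simp [ht.card_eq])

def discOneOn (hn : 1 ≤ n) (p : Fin 4) (hp : p ≠ 1) : PVertex n :=
  ⟨fun i => if i = ⟨0, hn⟩ then p else 0, fun d => by
    by_cases hd : d = ⟨0, hn⟩
    · subst hd; simp [hp]
    · simp [hd]⟩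

theorem discOneOn_adj (hn : 1 ≤ n) {p q : Fin 4} (hp : p ≠ 1) (hq : q ≠ 1) (hpq : p ≠ q) :
    (PGraph n).Adj (discOneOn hn p hp) (discOneOn hn q hq) :=
  ⟨⟨0, hn⟩, by simpa [discOneOn] using hpq, fun k hk => by simp [discOneOn, hk],
    fun k hk => (Nat.not_lt_zero k hk).elim⟩

theorem exists_isNClique_three (hn : 1 ≤ n) : ∃ t, (PGraph n).IsNClique 3 t :=
  ⟨_, SimpleGraph.is3Clique_triple_iff.mpr
    ⟨discOneOn_adj hn (p := 0) (q := 2) (by decide) (by decide) (by decide),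
      discOneOn_adj hn (p := 0) (q := 3) (by decide) (by decide) (by decide),
      discOneOn_adj hn (p := 2) (q := 3) (by decide) (by decide) (by decide)⟩⟩

end PGraph

/-- The clique number of `P^n` equals `3`: there is a triangle but no `K₄`. -/
theorem stmt16 : ∀ n : ℕ, 1 ≤ n →
    (PGraph n).cliqueNum = 3 ∧
    (∃ t : Finset (PVertex n), (PGraph n).IsNClique 3 t) ∧
    ∀ t : Finset (PVertex n), ¬ (PGraph n).IsNClique 4 t := by
  intro n hn
  obtain ⟨tri, htri⟩ := PGraph.exists_isNClique_three hn
  refine ⟨le_antisymm ?_ ?_, ⟨tri, htri⟩, PGraph.cliqueFree_four⟩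
  · obtain ⟨s, hs⟩ := (PGraph n).exists_isNClique_cliqueNum
    exact hs.card_eq ▸ PGraph.card_le_three_of_isClique hs.isClique
  · exact htri.card_eq ▸ SimpleGraph.IsClique.card_le_cliqueNum (tc := htri.isClique)
end

section
/- For all n ≥ 3, the chromatic index (edge chromatic number) of the parity-constrained Hanoi graph P^n equals 5; in fact, partitioning edges by the unordered pair of pegs involved in the move ({0,1},{0,2},{0,3},{1,3},{2,3}) gives a proper 5-edge-coloring in which each color class is a matching. -/
/-- A proper edge colouring of the edges of `G` with `k` colours: any two distinct
edges sharing a vertex receive different colours. -/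
def ProperEdgeColoring {V : Type*} (G : SimpleGraph V) {k : ℕ}
    (f : Sym2 V → Fin k) : Prop :=
  ∀ e ∈ G.edgeSet, ∀ e' ∈ G.edgeSet, e ≠ e' →
    (∃ v, v ∈ e ∧ v ∈ e') → f e ≠ f e'

/-!
Colour an edge by the unordered pair of pegs of its move. Two moves out of one state between
the same two pegs move the same disc, since a smaller moving disc would lie on top of one of the
pegs of the larger one; so this colouring is proper. The parity constraint rules out the pair
`{1, 2}`, which leaves five colours. Conversely, the state with discs `1, 2, 3` on pegs `2, 1, 0`
has five legal moves, so four colours do not suffice.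
-/

open Function

namespace ProperEdgeColoring

variable {V : Type*} {G : SimpleGraph V} {k : ℕ} {f : Sym2 V → Fin k}

theorem of_adj (h : ∀ v t t', G.Adj v t → G.Adj v t' → f s(v, t) = f s(v, t') → t = t') :
    ProperEdgeColoring G f := by
  rintro e he e' he' hne ⟨v, hv, hv'⟩ hcol
  obtain ⟨t, rfl⟩ := Sym2.mem_iff_exists.1 hv
  obtain ⟨t', rfl⟩ := Sym2.mem_iff_exists.1 hv'
  exact hne (congrArg _ (h v t t' he he' hcol))

theorem card_le (hf : ProperEdgeColoring G f) {m : ℕ} {v : V} {g : Fin m → V}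
    (hg : Injective g) (hadj : ∀ i, G.Adj v (g i)) : m ≤ k := by
  refine Fin.le_of_injective (fun i => f s(v, g i)) fun i j hij => ?_
  by_contra hne
  exact hf _ (hadj i) _ (hadj j) (fun h => hne (hg (Sym2.congr_right.1 h)))
    ⟨v, Sym2.mem_mk_left _ _, Sym2.mem_mk_left _ _⟩ hij

end ProperEdgeColoring

theorem Function.eq_of_update_eq_update {α β : Type*} [DecidableEq α] {f : α → β} {a a' : α}
    {b b' : β} (hb : b ≠ f a) (h : update f a b = update f a' b') : a = a' ∧ b = b' := by
  have ha : a = a' := by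
    by_contra ha
    have := congrFun h a
    rw [update_self, update_of_ne ha] at this
    exact hb this
  subst ha
  exact ⟨rfl, by simpa using congrFun h a⟩

variable {n : ℕ}

theorem pegOK.update {s : Fin n → Fin 4} (hs : pegOK n s) {d : Fin n} {x : Fin 4}
    (hx : (Even ((d : ℕ) + 1) → x ≠ 2) ∧ (Odd ((d : ℕ) + 1) → x ≠ 1)) :
    pegOK n (update s d x) := by
  intro k
  by_cases hk : k = d
  · subst hk; simpa using hx
  · simpa [update_of_ne hk] using hs k

theorem pegOK.sym2_ne {s t : Fin n → Fin 4} (hs : pegOK n s) (ht : pegOK n t) (d : Fin n) :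
    s(s d, t d) ≠ s(1, 2) := by
  rw [Ne, Sym2.eq_iff]
  rcases Nat.even_or_odd ((d : ℕ) + 1) with h | h
  · exact fun hst => hst.elim (fun h' => (ht d).1 h h'.2) (fun h' => (hs d).1 h h'.1)
  · exact fun hst => hst.elim (fun h' => (hs d).2 h h'.1) (fun h' => (ht d).2 h h'.2)

def IsMove (s t : Fin n → Fin 4) (d : Fin n) : Prop :=
  s d ≠ t d ∧ (∀ k, k ≠ d → s k = t k) ∧ (∀ k, k < d → s k ≠ s d ∧ s k ≠ t d)

theorem pGraph_adj_iff {s t : PVertex n} : (PGraph n).Adj s t ↔ ∃ d, IsMove s.1 t.1 d :=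
  Iff.rfl

theorem IsMove.of_update {s : Fin n → Fin 4} {d : Fin n} {x : Fin 4} (hx : s d ≠ x)
    (hsmall : ∀ k, k < d → s k ≠ s d ∧ s k ≠ x) : IsMove s (update s d x) d := by
  refine ⟨by simpa using hx, fun k hk => (update_of_ne hk _ _).symm, fun k hk => ?_⟩
  simpa using hsmall k hk

theorem IsMove.eq_of_sym2_eq {v t t' : Fin n → Fin 4} {d d' : Fin n} (h : IsMove v t d)
    (h' : IsMove v t' d') (hpegs : s(v d, t d) = s(v d', t' d')) : t = t' := by
  obtain ⟨hd, hsame, hsmall⟩ := h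
  obtain ⟨hd', hsame', hsmall'⟩ := h'
  rcases lt_trichotomy d d' with hlt | rfl | hlt
  · have hmem : v d ∈ s(v d', t' d') := hpegs ▸ Sym2.mem_mk_left _ _
    exact absurd (Sym2.mem_iff.1 hmem) (not_or.2 (hsmall' d hlt))
  · have htd : t d = t' d := by
      rcases Sym2.eq_iff.1 hpegs with ⟨-, he⟩ | ⟨-, he⟩
      exacts [he, (hd he.symm).elim]
    funext k
    by_cases hk : k = d
    · exact hk ▸ htd
    · rw [← hsame k hk, hsame' k hk]
  · have hmem : v d' ∈ s(v d, t d) := hpegs ▸ Sym2.mem_mk_left _ _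
    exact absurd (Sym2.mem_iff.1 hmem) (not_or.2 (hsmall d' hlt))

/-- On an edge of `P^n` this is `a + b`, where `{a, b}` is the peg pair of the move. -/
def moveCode (s t : Fin n → Fin 4) : ℕ :=
  ∑ d, if s d = t d then 0 else (s d : ℕ) + t d

theorem moveCode_comm (s t : Fin n → Fin 4) : moveCode s t = moveCode t s := by
  unfold moveCode
  congr 1 with d
  simp only [eq_comm (a := t d), add_comm]

theorem IsMove.moveCode_eq {s t : Fin n → Fin 4} {d : Fin n} (h : IsMove s t d) :
    moveCode s t = s d + t d := by
  rw [moveCode, Finset.sum_eq_single d (fun k _ hk => by simp [h.2.1 k hk]) (by simp), if_neg h.1]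

/-- Modulo `5` the sum `a + b` determines the pair `{a, b}` of distinct pegs, except that
`{1, 2}` collides with `{0, 3}`. -/
theorem sym2_eq_of_sum_eq : ∀ a b a' b' : Fin 4, a ≠ b → a' ≠ b' → s(a, b) ≠ s(1, 2) →
    s(a', b') ≠ s(1, 2) → Fin.ofNat 5 (a + b) = Fin.ofNat 5 (a' + b') →
    s(a, b) = s(a', b') := by
  decide

def pegColouring (n : ℕ) : Sym2 (PVertex n) → Fin 5 :=
  Sym2.lift ⟨fun s t => Fin.ofNat 5 (moveCode s.1 t.1),
    fun s t => congrArg (Fin.ofNat 5) (moveCode_comm s.1 t.1)⟩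

theorem properEdgeColoring_pegColouring : ProperEdgeColoring (PGraph n) (pegColouring n) := by
  refine ProperEdgeColoring.of_adj fun v t t' hadj hadj' hcol => ?_
  obtain ⟨d, hd⟩ := pGraph_adj_iff.1 hadj
  obtain ⟨d', hd'⟩ := pGraph_adj_iff.1 hadj'
  simp only [pegColouring, Sym2.lift_mk, hd.moveCode_eq, hd'.moveCode_eq] at hcol
  exact Subtype.ext (hd.eq_of_sym2_eq hd' (sym2_eq_of_sum_eq _ _ _ _ hd.1 hd'.1
    (v.2.sym2_ne t.2 d) (v.2.sym2_ne t'.2 d') hcol))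

/-- Peg of disc `d + 1` in a state of degree `5`. -/
def basePeg : ℕ → Fin 4
  | 0 => 2
  | 1 => 1
  | 2 => 0
  | _ => 3

theorem basePeg_parity :
    ∀ d : ℕ, (Even (d + 1) → basePeg d ≠ 2) ∧ (Odd (d + 1) → basePeg d ≠ 1)
  | 0 | 1 | 2 => by decide
  | _ + 3 => ⟨fun _ => by simp [basePeg], fun _ => by simp [basePeg]⟩

theorem pegOK_basePeg : pegOK n (fun d => basePeg d) :=
  fun d => basePeg_parity d

def fiveMoves : Fin 5 → ℕ × Fin 4 :=
  ![(0, 0), (0, 3), (1, 0), (1, 3), (2, 3)]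

theorem fiveMoves_injective : Injective fiveMoves := by
  decide

theorem fiveMoves_spec : ∀ i,
    (fiveMoves i).1 < 3 ∧ basePeg (fiveMoves i).1 ≠ (fiveMoves i).2 ∧
    ((Even ((fiveMoves i).1 + 1) → (fiveMoves i).2 ≠ 2) ∧
      (Odd ((fiveMoves i).1 + 1) → (fiveMoves i).2 ≠ 1)) ∧
    ∀ k < (fiveMoves i).1,
      basePeg k ≠ basePeg (fiveMoves i).1 ∧ basePeg k ≠ (fiveMoves i).2 := by
  decide

theorem exists_five_neighbours (hn : 3 ≤ n) : ∃ v : PVertex n, ∃ g : Fin 5 → PVertex n,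
    Injective g ∧ ∀ i, (PGraph n).Adj v (g i) := by
  let d (i : Fin 5) : Fin n := ⟨(fiveMoves i).1, by have := (fiveMoves_spec i).1; omega⟩
  refine ⟨⟨_, pegOK_basePeg⟩,
    fun i => ⟨update _ (d i) (fiveMoves i).2, pegOK_basePeg.update (fiveMoves_spec i).2.2.1⟩,
    fun i j hij => ?_, fun i => ⟨d i, IsMove.of_update (fiveMoves_spec i).2.1 fun k hk => ?_⟩⟩
  · obtain ⟨hd, hx⟩ := eq_of_update_eq_update (f := fun k : Fin n => basePeg k)
      (fiveMoves_spec i).2.1.symm (congrArg Subtype.val hij)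
    exact fiveMoves_injective (Prod.ext (congrArg Fin.val hd) hx)
  · exact (fiveMoves_spec i).2.2.2 k hk

/-- For `n ≥ 3` the chromatic index of `P^n` equals `5`: there is a proper
`5`-edge-colouring but no proper `4`-edge-colouring. -/
theorem stmt18 : ∀ n : ℕ, 3 ≤ n →
    (∃ f : Sym2 (PVertex n) → Fin 5, ProperEdgeColoring (PGraph n) f) ∧
    ¬ ∃ f : Sym2 (PVertex n) → Fin 4, ProperEdgeColoring (PGraph n) f := by
  intro n hn
  refine ⟨⟨pegColouring n, properEdgeColoring_pegColouring⟩, fun ⟨f, hf⟩ => ?_⟩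
  obtain ⟨v, g, hg, hadj⟩ := exists_five_neighbours hn
  exact absurd (hf.card_le hg hadj) (by decide)
end

section
/- Define b by b(0)=0, b(1)=1, b(2)=2, and for n≥3: b(n)=b(n-3)+7·2^((n-4)/2)−1 if n is even, b(n)=b(n-3)+5·2^((n-3)/2)−1 if n is odd. Then b(n)/b(n-2) → 2 as n→∞. -/
open Filter

/-- Two-step growth of the parity-separation sequence: `b(n)/b(n-2) → 2`. -/
theorem stmt19 (b : ℕ → ℕ)
    (hb0 : b 0 = 0) (hb1 : b 1 = 1) (hb2 : b 2 = 2)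
    (hbe : ∀ n, 3 ≤ n → Even n → b n = b (n - 3) + 7 * 2 ^ ((n - 4) / 2) - 1)
    (hbo : ∀ n, 3 ≤ n → Odd n → b n = b (n - 3) + 5 * 2 ^ ((n - 3) / 2) - 1) :
    Tendsto (fun n : ℕ => (b n : ℝ) / (b (n - 2) : ℝ)) atTop (nhds 2) := by
  -- cast versions of the recurrences
  have caste : ∀ n, 3 ≤ n → Even n →
      (b n : ℝ) = (b (n - 3) : ℝ) + 7 * 2 ^ ((n - 4) / 2) - 1 := by
    intro n hn he
    have h1 : 1 ≤ b (n - 3) + 7 * 2 ^ ((n - 4) / 2) := by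
      have := Nat.one_le_two_pow (n := (n - 4) / 2); omega
    rw [hbe n hn he, Nat.cast_sub h1]; push_cast; ring
  have casto : ∀ n, 3 ≤ n → Odd n →
      (b n : ℝ) = (b (n - 3) : ℝ) + 5 * 2 ^ ((n - 3) / 2) - 1 := by
    intro n hn ho
    have h1 : 1 ≤ b (n - 3) + 5 * 2 ^ ((n - 3) / 2) := by
      have := Nat.one_le_two_pow (n := (n - 3) / 2); omega
    rw [hbo n hn ho, Nat.cast_sub h1]; push_cast; ring
  -- structural lemma: b n = 2 b (n-2) + m with 2 ≤ m ≤ n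
  have key : ∀ n, 3 ≤ n → ∃ m : ℕ, 2 ≤ m ∧ m ≤ n ∧
      (b n : ℝ) = 2 * (b (n - 2) : ℝ) + m := by
    intro n
    induction n using Nat.strong_induction_on with
    | _ n ih =>
      intro hn
      by_cases h6 : n < 6
      · interval_cases n
        · refine ⟨2, le_refl _, by norm_num, ?_⟩
          have e := casto 3 (by norm_num) (by decide)
          norm_num [hb0, hb1] at e ⊢
          rw [e]
        · refine ⟨3, by norm_num, by norm_num, ?_⟩
          have e := caste 4 (by norm_num) (by decide)
          norm_num [hb1, hb2] at e ⊢
          rw [e]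
        · refine ⟨3, by norm_num, by norm_num, ?_⟩
          have e := casto 5 (by norm_num) (by decide)
          have e3 := casto 3 (by norm_num) (by decide)
          norm_num [hb0, hb2] at e e3 ⊢
          rw [e, e3]; norm_num
      · push_neg at h6
        obtain ⟨m, hm2, hmn, hmeq⟩ := ih (n - 3) (by omega) (by omega)
        have hsub : n - 3 - 2 = n - 5 := by omega
        rw [hsub] at hmeq
        rcases Nat.even_or_odd n with he | ho
        · have R1 := caste n (by omega) he
          have he2 : Even (n - 2) := by
            rcases he with ⟨k, hk⟩; exact ⟨k - 1, by omega⟩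
          have R2 := caste (n - 2) (by omega) he2
          have hs1 : n - 2 - 3 = n - 5 := by omega
          have hs2 : n - 2 - 4 = n - 6 := by omega
          rw [hs1, hs2] at R2
          have hp : (2 : ℝ) ^ ((n - 4) / 2) = 2 * 2 ^ ((n - 6) / 2) := by
            rw [show (n - 4) / 2 = (n - 6) / 2 + 1 by omega, pow_succ]; ring
          exact ⟨m + 1, by omega, by omega, by push_cast; linarith⟩
        · have R1 := casto n (by omega) ho
          have ho2 : Odd (n - 2) := by
            rcases ho with ⟨k, hk⟩; exact ⟨k - 1, by omega⟩
          have R2 := casto (n - 2) (by omega) ho2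
          have hs1 : n - 2 - 3 = n - 5 := by omega
          rw [hs1] at R2
          have hp : (2 : ℝ) ^ ((n - 3) / 2) = 2 * 2 ^ ((n - 5) / 2) := by
            rw [show (n - 3) / 2 = (n - 5) / 2 + 1 by omega, pow_succ]; ring
          exact ⟨m + 1, by omega, by omega, by push_cast; linarith⟩
  -- growth lemma
  have grow : ∀ n, 1 ≤ n → (2 : ℝ) ^ ((n - 1) / 2) ≤ (b n : ℝ) := by
    intro n
    induction n using Nat.strong_induction_on with
    | _ n ih =>
      intro hn
      by_cases h3 : n < 3
      · interval_cases n
        · simp [hb1]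
        · norm_num [hb2]
      · push_neg at h3
        obtain ⟨m, hm2, _, hmeq⟩ := key n h3
        have hg := ih (n - 2) (by omega) (by omega)
        have hs : n - 2 - 1 = n - 3 := by omega
        rw [hs] at hg
        have hp : (2 : ℝ) ^ ((n - 1) / 2) = 2 * 2 ^ ((n - 3) / 2) := by
          rw [show (n - 1) / 2 = (n - 3) / 2 + 1 by omega, pow_succ]; ring
        have hm2' : (2 : ℝ) ≤ m := by exact_mod_cast hm2
        rw [hmeq, hp]; nlinarith
  -- auxiliary limit : U k = (2k+5) (1/2)^k → 0
  set U : ℕ → ℝ := fun k => (2 * (k : ℝ) + 5) * (1 / 2 : ℝ) ^ k with hUdef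
  have aux : Tendsto U atTop (nhds 0) := by
    have h1 : Tendsto (fun k : ℕ => (k : ℝ) * (1 / 2 : ℝ) ^ k) atTop (nhds 0) :=
      tendsto_self_mul_const_pow_of_lt_one (by norm_num) (by norm_num)
    have h2 : Tendsto (fun k : ℕ => (1 / 2 : ℝ) ^ k) atTop (nhds 0) :=
      tendsto_pow_atTop_nhds_zero_of_lt_one (by norm_num) (by norm_num)
    have h3 := (h1.const_mul 2).add (h2.const_mul 5)
    simp only [mul_zero, add_zero] at h3
    convert h3 using 2 with k
    simp [hUdef]; ring
  have hcomp : Tendsto (fun n : ℕ => (n - 3) / 2) atTop atTop := by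
    apply tendsto_atTop_atTop.2
    intro c
    exact ⟨2 * c + 3, fun n hn => by omega⟩
  have hUlim : Tendsto (fun n : ℕ => 2 + U ((n - 3) / 2)) atTop (nhds 2) := by
    have := (aux.comp hcomp).const_add 2
    simpa using this
  refine tendsto_of_tendsto_of_tendsto_of_le_of_le' tendsto_const_nhds hUlim ?_ ?_
  · filter_upwards [eventually_ge_atTop 3] with n hn
    obtain ⟨m, hm2, _, hmeq⟩ := key n hn
    have hg := grow (n - 2) (by omega)
    have hbpos : (0 : ℝ) < (b (n - 2) : ℝ) :=
      lt_of_lt_of_le (by positivity) hg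
    have hm0 : (0 : ℝ) ≤ (m : ℝ) := by positivity
    rw [hmeq, le_div_iff₀ hbpos]
    linarith
  · filter_upwards [eventually_ge_atTop 3] with n hn
    obtain ⟨m, hm2, hmn, hmeq⟩ := key n hn
    have hg := grow (n - 2) (by omega)
    have hs : n - 2 - 1 = n - 3 := by omega
    rw [hs] at hg
    have hppos : (0 : ℝ) < (2 : ℝ) ^ ((n - 3) / 2) := by positivity
    have hbpos : (0 : ℝ) < (b (n - 2) : ℝ) := lt_of_lt_of_le hppos hg
    rw [hmeq, add_div, mul_div_assoc, div_self hbpos.ne', mul_one]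
    have step1 : (m : ℝ) / (b (n - 2) : ℝ) ≤ (n : ℝ) / 2 ^ ((n - 3) / 2) :=
      div_le_div₀ (by positivity) (by exact_mod_cast hmn) hppos hg
    have step2 : (n : ℝ) / 2 ^ ((n - 3) / 2) ≤ U ((n - 3) / 2) := by
      have hn5 : (n : ℝ) ≤ 2 * (((n - 3) / 2 : ℕ) : ℝ) + 5 := by
        have h' : n ≤ 2 * ((n - 3) / 2) + 5 := by omega
        exact_mod_cast h'
      calc (n : ℝ) / 2 ^ ((n - 3) / 2)
          ≤ (2 * (((n - 3) / 2 : ℕ) : ℝ) + 5) / 2 ^ ((n - 3) / 2) := by gcongr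
        _ = U ((n - 3) / 2) := by
            simp only [hUdef, div_eq_mul_inv, one_mul, inv_pow]
    linarith
end
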